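/- Let (A,·,α) be a regular finite-dimensional Hom-pre-Lie algebra with a Hessian structure B. Then the bilinear products ▷,◁ on A uniquely determined by B(x▷y, z) = −B(y, [α^{-1}(x), α^{-2}(z)]) and B(x◁y, z) = −B(y, α^{-2}(z)·α^{-1}(x)) for all x,y,z ∈ A (where [u,v] = u·v − v·u) make (A,▷,◁,α) a Hom-L-dendriform algebra whose associated vertical product satisfies x▷y − y◁x = x·y for all x,y ∈ A. -/

import Mathlib

open TensorProduct LinearMap Module

section Defs

variable {K : Type*} [Field K]

section Basic
variable {A : Type*} [AddCommGroup A] [Module K A]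
variable {B : Type*} [AddCommGroup B] [Module K B]
variable {V : Type*} [AddCommGroup V] [Module K V]

/-- A Hom-pre-Lie algebra structure. -/
def IsHomPreLie (m : A →ₗ[K] A →ₗ[K] A) (α : A →ₗ[K] A) : Prop :=
  (∀ x y, α (m x y) = m (α x) (α y)) ∧
  ∀ x y z, m (m x y) (α z) - m (α x) (m y z) = m (m y x) (α z) - m (α y) (m x z)

/-- A Hom-Lie algebra structure. -/
def IsHomLie (br : A →ₗ[K] A →ₗ[K] A) (φ : A →ₗ[K] A) : Prop :=
  (∀ x y, br x y = - br y x) ∧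
  (∀ x y, φ (br x y) = br (φ x) (φ y)) ∧
  ∀ x y z, br (φ x) (br y z) + br (φ y) (br z x) + br (φ z) (br x y) = 0

/-- A representation of a Hom-Lie algebra on `V` with respect to `β`. -/
def IsHomLieRep (br : A →ₗ[K] A →ₗ[K] A) (φ : A →ₗ[K] A)
    (β : Module.End K V) (ρ : A →ₗ[K] Module.End K V) : Prop :=
  (∀ x, ρ (φ x) * β = β * ρ x) ∧
  ∀ x y, ρ (br x y) * β = ρ (φ x) * ρ y - ρ (φ y) * ρ x

/-- A representation of a Hom-pre-Lie algebra on `V` with respect to `β`. -/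
def IsHomPreLieRep (m : A →ₗ[K] A →ₗ[K] A) (α : A →ₗ[K] A)
    (β : Module.End K V) (ρ μ : A →ₗ[K] Module.End K V) : Prop :=
  IsHomLieRep (m - m.flip) α β ρ ∧
  (∀ x, β * μ x = μ (α x) * β) ∧
  ∀ x y, μ (α y) * μ x - μ (m x y) * β = μ (α y) * ρ x - ρ (α x) * μ y

/-- A 1-cocycle of a Hom-Lie algebra with respect to a representation. -/
def IsHomLieCocycle (br : A →ₗ[K] A →ₗ[K] A) (φ : A →ₗ[K] A)
    (ρ : A →ₗ[K] Module.End K V) (δ : A →ₗ[K] V) : Prop :=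
  ∀ x y, δ (br x y) = ρ (φ x) (δ y) - ρ (φ y) (δ x)

/-- A matched pair of Hom-Lie algebras. -/
def IsHomLieMatchedPair (brA : A →ₗ[K] A →ₗ[K] A) (φA : A →ₗ[K] A)
    (brB : B →ₗ[K] B →ₗ[K] B) (φB : B →ₗ[K] B)
    (ρ : A →ₗ[K] Module.End K B) (ρ' : B →ₗ[K] Module.End K A) : Prop :=
  IsHomLie brA φA ∧ IsHomLie brB φB ∧
  IsHomLieRep brA φA φB ρ ∧ IsHomLieRep brB φB φA ρ' ∧
  (∀ x y x', ρ' (φB x') (brA x y) =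
    brA (ρ' x' x) (φA y) + brA (φA x) (ρ' x' y) + ρ' (ρ y x') (φA x) - ρ' (ρ x x') (φA y)) ∧
  ∀ x x' y', ρ (φA x) (brB x' y') =
    brB (ρ x x') (φB y') + brB (φB x') (ρ x y') + ρ (ρ' y' x) (φB x') - ρ (ρ' x' x) (φB y')

/-- A matched pair of Hom-pre-Lie algebras. -/
def IsHomPreLieMatchedPair (mA : A →ₗ[K] A →ₗ[K] A) (αA : A →ₗ[K] A)
    (mB : B →ₗ[K] B →ₗ[K] B) (αB : B →ₗ[K] B)
    (lA rA : A →ₗ[K] Module.End K B) (lB rB : B →ₗ[K] Module.End K A) : Prop :=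
  IsHomPreLie mA αA ∧ IsHomPreLie mB αB ∧
  IsHomPreLieRep mA αA αB lA rA ∧ IsHomPreLieRep mB αB αA lB rB ∧
  (∀ (x : A) (a b : B), rA (αA x) (mB a b - mB b a) =
    rA (lB b x) (αB a) - rA (lB a x) (αB b) + mB (αB a) (rA x b) - mB (αB b) (rA x a)) ∧
  (∀ (x : A) (a b : B), lA (αA x) (mB a b) =
    -(lA (lB a x - rB a x) (αB b)) + mB (lA x a - rA x a) (αB b)
      + rA (rB b x) (αB a) + mB (αB a) (lA x b)) ∧
  (∀ (a : B) (x y : A), rB (αB a) (mA x y - mA y x) =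
    rB (lA y a) (αA x) - rB (lA x a) (αA y) + mA (αA x) (rB a y) - mA (αA y) (rB a x)) ∧
  ∀ (a : B) (x y : A), lB (αB a) (mA x y) =
    -(lB (lA x a - rA x a) (αA y)) + mA (lB a x - rB a x) (αA y)
      + rB (rA y a) (αA x) + mA (αA x) (lB a y)

/-- A Hom-L-dendriform algebra structure. -/
def IsHomLDendriform (tr tl : A →ₗ[K] A →ₗ[K] A) (α : A →ₗ[K] A) : Prop :=
  (∀ x y, α (tr x y) = tr (α x) (α y)) ∧
  (∀ x y, α (tl x y) = tl (α x) (α y)) ∧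
  (∀ x y z, tr (tr x y) (α z) + tr (tl x y) (α z) + tr (α y) (tr x z)
      - tr (tl y x) (α z) - tr (tr y x) (α z) - tr (α x) (tr y z) = 0) ∧
  ∀ x y z, tl (tr x y) (α z) + tl (α y) (tr x z) + tl (α y) (tl x z)
      - tl (tl y x) (α z) - tr (α x) (tl y z) = 0

/-- A Hom-O-operator on a Hom-pre-Lie algebra with respect to a representation. -/
def IsHomOOperator (m : A →ₗ[K] A →ₗ[K] A) (α : A →ₗ[K] A)
    (β : V ≃ₗ[K] V) (ρ μ : A →ₗ[K] Module.End K V) (T : V →ₗ[K] A) : Prop :=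
  (∀ v, T (β v) = α (T v)) ∧
  ∀ u v, m (T u) (T v) = T (ρ (T (β.symm u)) v + μ (T (β.symm v)) u)

/-- A quadratic Hom-pre-Lie algebra. -/
def IsQuadraticHomPreLie (m : A →ₗ[K] A →ₗ[K] A) (α : A →ₗ[K] A)
    (ω : A →ₗ[K] A →ₗ[K] K) : Prop :=
  IsHomPreLie m α ∧
  (∀ x y, ω x y = - ω y x) ∧
  (∀ x, (∀ y, ω x y = 0) → x = 0) ∧
  (∀ x y, ω (α x) (α y) = ω x y) ∧
  ∀ x y z, ω (m x y) (α z) = - ω (α y) (m x z - m z x)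

/-- A Manin triple for Hom-pre-Lie algebras. -/
def IsManinTriple (m : A →ₗ[K] A →ₗ[K] A) (α : A →ₗ[K] A)
    (ω : A →ₗ[K] A →ₗ[K] K) (A1 A2 : Submodule K A) : Prop :=
  IsQuadraticHomPreLie m α ω ∧
  (∀ x ∈ A1, ∀ y ∈ A1, m x y ∈ A1) ∧ (∀ x ∈ A1, α x ∈ A1) ∧
  (∀ x ∈ A2, ∀ y ∈ A2, m x y ∈ A2) ∧ (∀ x ∈ A2, α x ∈ A2) ∧
  (∀ x ∈ A1, ∀ y ∈ A1, ω x y = 0) ∧ (∀ x ∈ A2, ∀ y ∈ A2, ω x y = 0) ∧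
  IsCompl A1 A2

/-- A Hessian structure on a Hom-pre-Lie algebra. -/
def IsHessian (m : A →ₗ[K] A →ₗ[K] A) (α : A →ₗ[K] A) (Bf : A →ₗ[K] A →ₗ[K] K) : Prop :=
  (∀ x y, Bf x y = Bf y x) ∧ (∀ x, (∀ y, Bf x y = 0) → x = 0) ∧
  (∀ x y, Bf (α x) (α y) = Bf x y) ∧
  ∀ x y z, Bf (m x y) (α z) - Bf (α x) (m y z) = Bf (m y x) (α z) - Bf (α y) (m x z)

end Basic

section Transpose
variable {X Y : Type*} [AddCommGroup X] [Module K X] [AddCommGroup Y] [Module K Y]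

/-- The transpose of linear maps, as a bundled linear map. -/
noncomputable def transposeH : (X →ₗ[K] Y) →ₗ[K] (Y →ₗ[K] K) →ₗ[K] (X →ₗ[K] K) :=
  (LinearMap.llcomp K X Y K).flip

@[simp] theorem transposeH_apply (f : X →ₗ[K] Y) (ξ : Y →ₗ[K] K) (x : X) :
    transposeH f ξ x = ξ (f x) := rfl

end Transpose

section StarOps
variable {A : Type*} [AddCommGroup A] [Module K A]

/-- The evaluation map into the double dual. -/
noncomputable def evalH : A →ₗ[K] ((A →ₗ[K] K) →ₗ[K] K) :=
  (LinearMap.id : (A →ₗ[K] K) →ₗ[K] (A →ₗ[K] K)).flip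

/-- The operator `L^⋆` : `⟨L^⋆_x ξ, y⟩ = -⟨ξ, α⁻¹(x) · α⁻²(y)⟩`. -/
noncomputable def Lstar (m : A →ₗ[K] A →ₗ[K] A) (α : A ≃ₗ[K] A) :
    A →ₗ[K] (A →ₗ[K] K) →ₗ[K] (A →ₗ[K] K) :=
  @Neg.neg _ (@LinearMap.instNeg K K A ((A →ₗ[K] K) →ₗ[K] (A →ₗ[K] K)) _ _ _ _ _ _ _) (transposeH ∘ₗ
      (LinearMap.lcomp K A ((α ^ (-2 : ℤ) : A ≃ₗ[K] A) : A →ₗ[K] A)) ∘ₗ m ∘ₗ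
      ((α⁻¹ : A ≃ₗ[K] A) : A →ₗ[K] A))

/-- The operator `R^⋆` : `⟨R^⋆_x ξ, y⟩ = -⟨ξ, α⁻²(y) · α⁻¹(x)⟩`. -/
noncomputable def Rstar (m : A →ₗ[K] A →ₗ[K] A) (α : A ≃ₗ[K] A) :
    A →ₗ[K] (A →ₗ[K] K) →ₗ[K] (A →ₗ[K] K) :=
  @Neg.neg _ (@LinearMap.instNeg K K A ((A →ₗ[K] K) →ₗ[K] (A →ₗ[K] K)) _ _ _ _ _ _ _) (transposeH ∘ₗ
      (LinearMap.lcomp K A ((α ^ (-2 : ℤ) : A ≃ₗ[K] A) : A →ₗ[K] A)) ∘ₗ m.flip ∘ₗ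
      ((α⁻¹ : A ≃ₗ[K] A) : A →ₗ[K] A))

/-- The operator `ad^⋆ = L^⋆ - R^⋆`. -/
noncomputable def adStar (m : A →ₗ[K] A →ₗ[K] A) (α : A ≃ₗ[K] A) :
    A →ₗ[K] (A →ₗ[K] K) →ₗ[K] (A →ₗ[K] K) :=
  @HSub.hSub _ _ _ (@instHSub _ (@LinearMap.instSub K K A ((A →ₗ[K] K) →ₗ[K] (A →ₗ[K] K)) _ _ _ _ _ _ _)) (Lstar m α) (Rstar m α)

variable [FiniteDimensional K A]

/-- The inverse of the double-dual evaluation isomorphism. -/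
noncomputable def evalInvH : ((A →ₗ[K] K) →ₗ[K] K) →ₗ[K] A :=
  (Module.evalEquiv K A).symm.toLinearMap

/-- The operator `ℒ^⋆` : `⟨η, ℒ^⋆_ξ x⟩ = -⟨(α⁻¹)*(ξ) ∘ η, α²(x)⟩`. -/
noncomputable def Lcurly
    (mc : (A →ₗ[K] K) →ₗ[K] (A →ₗ[K] K) →ₗ[K] (A →ₗ[K] K))
    (α : A ≃ₗ[K] A) : (A →ₗ[K] K) →ₗ[K] A →ₗ[K] A :=
  -((LinearMap.llcomp K A ((A →ₗ[K] K) →ₗ[K] K) A evalInvH) ∘ₗ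
      (LinearMap.lcomp K ((A →ₗ[K] K) →ₗ[K] K)
        (evalH ∘ₗ ((α ^ (2 : ℤ) : A ≃ₗ[K] A) : A →ₗ[K] A))) ∘ₗ
      transposeH ∘ₗ mc ∘ₗ
      (transposeH ((α⁻¹ : A ≃ₗ[K] A) : A →ₗ[K] A)))

/-- The operator `ℛ^⋆` : `⟨η, ℛ^⋆_ξ x⟩ = -⟨η ∘ (α⁻¹)*(ξ), α²(x)⟩`. -/
noncomputable def Rcurly
    (mc : (A →ₗ[K] K) →ₗ[K] (A →ₗ[K] K) →ₗ[K] (A →ₗ[K] K))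
    (α : A ≃ₗ[K] A) : (A →ₗ[K] K) →ₗ[K] A →ₗ[K] A :=
  -((LinearMap.llcomp K A ((A →ₗ[K] K) →ₗ[K] K) A evalInvH) ∘ₗ
      (LinearMap.lcomp K ((A →ₗ[K] K) →ₗ[K] K)
        (evalH ∘ₗ ((α ^ (2 : ℤ) : A ≃ₗ[K] A) : A →ₗ[K] A))) ∘ₗ
      transposeH ∘ₗ mc.flip ∘ₗ
      (transposeH ((α⁻¹ : A ≃ₗ[K] A) : A →ₗ[K] A)))

/-- The operator `𝔞𝔡^⋆ = ℒ^⋆ - ℛ^⋆`. -/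
noncomputable def adCurly
    (mc : (A →ₗ[K] K) →ₗ[K] (A →ₗ[K] K) →ₗ[K] (A →ₗ[K] K))
    (α : A ≃ₗ[K] A) : (A →ₗ[K] K) →ₗ[K] A →ₗ[K] A :=
  Lcurly mc α - Rcurly mc α

end StarOps

section Tensor
variable {A : Type*} [AddCommGroup A] [Module K A]

/-- The pairing of `ξ ⊗ η` with elements of `A ⊗ A`. -/
noncomputable def tpair (ξ η : A →ₗ[K] K) : (A ⊗[K] A) →ₗ[K] K :=
  (TensorProduct.lid K K).toLinearMap ∘ₗ TensorProduct.map ξ η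

/-- The pairing of `x ⊗ y` with elements of `A* ⊗ A*`. -/
noncomputable def dpair (x y : A) : ((A →ₗ[K] K) ⊗[K] (A →ₗ[K] K)) →ₗ[K] K :=
  (TensorProduct.lid K K).toLinearMap ∘ₗ TensorProduct.map (evalH x) (evalH y)

/-- Pairing the first two tensor components of `A ⊗ A ⊗ A` with `ξ` and `η`. -/
noncomputable def pair12 (ξ η : A →ₗ[K] K) : (A ⊗[K] (A ⊗[K] A)) →ₗ[K] A :=
  (TensorProduct.lid K A).toLinearMap ∘ₗ
    TensorProduct.map ξ ((TensorProduct.lid K A).toLinearMap ∘ₗ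
      TensorProduct.map η LinearMap.id)

/-- The map `r^♯ : A* → A` associated to `r ∈ A ⊗ A`, `⟨r^♯(ξ), η⟩ = ⟨r, ξ ⊗ η⟩`. -/
noncomputable def rSharpL (r : A ⊗[K] A) : (A →ₗ[K] K) →ₗ[K] A :=
  ((LinearMap.llcomp K (A ⊗[K] A) (K ⊗[K] A) A (TensorProduct.lid K A).toLinearMap) ∘ₗ
    (LinearMap.rTensorHom A)).flip r

/-- The bilinear operation producing `[[r,r]]` out of `r ⊗ r`. -/
noncomputable def homPreLieBB (m : A →ₗ[K] A →ₗ[K] A) (α : A →ₗ[K] A) :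
    ((A ⊗[K] A) ⊗[K] (A ⊗[K] A)) →ₗ[K] (A ⊗[K] (A ⊗[K] A)) :=
  (TensorProduct.assoc K A A A).toLinearMap ∘ₗ
      (TensorProduct.map (TensorProduct.map α α) (TensorProduct.lift m)) ∘ₗ
      (TensorProduct.tensorTensorTensorComm K A A A A).toLinearMap
    - (TensorProduct.map α (TensorProduct.map (TensorProduct.lift (m.flip - m)) α)) ∘ₗ
      (LinearMap.lTensor A ((TensorProduct.assoc K A A A).symm.toLinearMap)) ∘ₗ
      (TensorProduct.assoc K A A (A ⊗[K] A)).toLinearMap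
    - (TensorProduct.map (TensorProduct.lift m)
        ((TensorProduct.map α α) ∘ₗ (TensorProduct.comm K A A).toLinearMap)) ∘ₗ
      (TensorProduct.tensorTensorTensorComm K A A A A).toLinearMap

/-- The element `[[r,r]] ∈ A ⊗ A ⊗ A`. -/
noncomputable def bracket2 (m : A →ₗ[K] A →ₗ[K] A) (α : A →ₗ[K] A) (r : A ⊗[K] A) :
    A ⊗[K] (A ⊗[K] A) :=
  homPreLieBB m α (r ⊗ₜ[K] r)

/-- A Hom-s-matrix in a Hom-pre-Lie algebra. -/
def IsHomSMatrix {B : Type*} [AddCommGroup B] [Module K B]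
    (mB : B →ₗ[K] B →ₗ[K] B) (γ : B ≃ₗ[K] B) (r : B ⊗[K] B) : Prop :=
  (TensorProduct.comm K B B) r = r ∧
  (∀ ξ, rSharpL r (ξ ∘ₗ ((γ⁻¹ : B ≃ₗ[K] B) : B →ₗ[K] B)) = γ (rSharpL r ξ)) ∧
  bracket2 mB (γ : B →ₗ[K] B) r = 0

/-- The representation `x ↦ F(x) ⊗ c + c ⊗ G(x)` on `Y ⊗ Y`. -/
noncomputable def tensorRep {Y : Type*} [AddCommGroup Y] [Module K Y]
    (F G : A →ₗ[K] Y →ₗ[K] Y) (c : Y →ₗ[K] Y) :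
    A →ₗ[K] Module.End K (Y ⊗[K] Y) :=
  (LinearMap.mulRight K (LinearMap.lTensor Y c)) ∘ₗ (LinearMap.rTensorHom Y) ∘ₗ F
    + (LinearMap.mulLeft K (LinearMap.rTensor Y c)) ∘ₗ (LinearMap.lTensorHom Y) ∘ₗ G

/-- The dual map `ρ^⋆` : `⟨ρ^⋆(x)ξ, u⟩ = -⟨(β⁻²)*(ξ), ρ(α(x))u⟩`. -/
noncomputable def rhoStar {V : Type*} [AddCommGroup V] [Module K V]
    (α : A →ₗ[K] A) (β : V ≃ₗ[K] V) (ρ : A →ₗ[K] Module.End K V) :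
    A →ₗ[K] (V →ₗ[K] K) →ₗ[K] (V →ₗ[K] K) :=
  @Neg.neg _ (@LinearMap.instNeg K K A ((V →ₗ[K] K) →ₗ[K] (V →ₗ[K] K)) _ _ _ _ _ _ _) (transposeH ∘ₗ
      (LinearMap.mulLeft K (((β ^ (-2 : ℤ) : V ≃ₗ[K] V) : V →ₗ[K] V) : Module.End K V)) ∘ₗ
      ρ ∘ₗ α)

/-- The semidirect product Hom-pre-Lie product on `A × W`. -/
noncomputable def sdProduct {W : Type*} [AddCommGroup W] [Module K W]
    (m : A →ₗ[K] A →ₗ[K] A) (l r : A →ₗ[K] W →ₗ[K] W) :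
    (A × W) →ₗ[K] (A × W) →ₗ[K] (A × W) :=
  (m.compl₁₂ (LinearMap.fst K A W) (LinearMap.fst K A W)).compr₂ (LinearMap.inl K A W)
    + ((l.compl₁₂ (LinearMap.fst K A W) (LinearMap.snd K A W))
        + (r.compl₁₂ (LinearMap.fst K A W) (LinearMap.snd K A W)).flip).compr₂
      (LinearMap.inr K A W)

end Tensor

section Std
variable (K)
variable (A : Type*) [AddCommGroup A] [Module K A]

/-- The standard bilinear form `ω̄(x+ξ, y+η) = ⟨ξ,y⟩ - ⟨η,x⟩` on `A × A*`. -/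
noncomputable def stdOmega :
    (A × (A →ₗ[K] K)) →ₗ[K] (A × (A →ₗ[K] K)) →ₗ[K] K :=
  (LinearMap.id : (A →ₗ[K] K) →ₗ[K] (A →ₗ[K] K)).compl₁₂
      (LinearMap.snd K A (A →ₗ[K] K)) (LinearMap.fst K A (A →ₗ[K] K))
    - ((LinearMap.id : (A →ₗ[K] K) →ₗ[K] (A →ₗ[K] K)).compl₁₂
      (LinearMap.snd K A (A →ₗ[K] K)) (LinearMap.fst K A (A →ₗ[K] K))).flip

variable {K A}

/-- The standard product `⋄` on `A × A*`:
`(x+ξ) ⋄ (y+η) = x·y + 𝔞𝔡^⋆_ξ y - ℛ^⋆_η x + ξ∘η + ad^⋆_x η - R^⋆_y ξ`. -/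
noncomputable def stdDiamond [FiniteDimensional K A]
    (m : A →ₗ[K] A →ₗ[K] A) (α : A ≃ₗ[K] A)
    (mc : (A →ₗ[K] K) →ₗ[K] (A →ₗ[K] K) →ₗ[K] (A →ₗ[K] K)) :
    (A × (A →ₗ[K] K)) →ₗ[K] (A × (A →ₗ[K] K)) →ₗ[K] (A × (A →ₗ[K] K)) :=
  (m.compl₁₂ (LinearMap.fst K A (A →ₗ[K] K)) (LinearMap.fst K A (A →ₗ[K] K))
      + (adCurly mc α).compl₁₂ (LinearMap.snd K A (A →ₗ[K] K)) (LinearMap.fst K A (A →ₗ[K] K))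
      - ((Rcurly mc α).compl₁₂ (LinearMap.snd K A (A →ₗ[K] K))
          (LinearMap.fst K A (A →ₗ[K] K))).flip).compr₂
      (LinearMap.inl K A (A →ₗ[K] K))
    + (@HSub.hSub _ _ _ (@instHSub _ (@LinearMap.instSub K K (A × (A →ₗ[K] K)) ((A × (A →ₗ[K] K)) →ₗ[K] (A →ₗ[K] K)) _ _ _ _ _ _ _))
        (mc.compl₁₂ (LinearMap.snd K A (A →ₗ[K] K)) (LinearMap.snd K A (A →ₗ[K] K))
      + (adStar m α).compl₁₂ (LinearMap.fst K A (A →ₗ[K] K)) (LinearMap.snd K A (A →ₗ[K] K)))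
      (((Rstar m α).compl₁₂ (LinearMap.fst K A (A →ₗ[K] K))
          (LinearMap.snd K A (A →ₗ[K] K))).flip)).compr₂
      (LinearMap.inr K A (A →ₗ[K] K))

end Std

section Bialg
variable {A : Type*} [AddCommGroup A] [Module K A]

/-- A Hom-pre-Lie bialgebra: the two 1-cocycle conditions on the
comultiplications `φ*` and `ψ*`. -/
def IsHomPreLieBialgebra (m : A →ₗ[K] A →ₗ[K] A) (α : A ≃ₗ[K] A)
    (mc : (A →ₗ[K] K) →ₗ[K] (A →ₗ[K] K) →ₗ[K] (A →ₗ[K] K))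
    (φs : A →ₗ[K] A ⊗[K] A)
    (ψs : (A →ₗ[K] K) →ₗ[K] (A →ₗ[K] K) ⊗[K] (A →ₗ[K] K)) : Prop :=
  IsHomLieCocycle (m - m.flip) (α : A →ₗ[K] A)
    (tensorRep (m ∘ₗ ((α ^ (-2 : ℤ) : A ≃ₗ[K] A) : A →ₗ[K] A))
      ((m - m.flip) ∘ₗ ((α ^ (-2 : ℤ) : A ≃ₗ[K] A) : A →ₗ[K] A))
      (α : A →ₗ[K] A)) φs ∧
  IsHomLieCocycle (@HSub.hSub _ _ _ (@instHSub _ (@LinearMap.instSub K K (A →ₗ[K] K) ((A →ₗ[K] K) →ₗ[K] (A →ₗ[K] K)) _ _ _ _ _ _ _)) mc mc.flip) (transposeH ((α⁻¹ : A ≃ₗ[K] A) : A →ₗ[K] A))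
    (tensorRep (mc ∘ₗ transposeH ((α ^ (2 : ℤ) : A ≃ₗ[K] A) : A →ₗ[K] A))
      ((@HSub.hSub _ _ _ (@instHSub _ (@LinearMap.instSub K K (A →ₗ[K] K) ((A →ₗ[K] K) →ₗ[K] (A →ₗ[K] K)) _ _ _ _ _ _ _)) mc mc.flip) ∘ₗ transposeH ((α ^ (2 : ℤ) : A ≃ₗ[K] A) : A →ₗ[K] A))
      (transposeH ((α⁻¹ : A ≃ₗ[K] A) : A →ₗ[K] A))) ψs

end Bialg

end Defs

section MyAux
variable {K : Type*} [Field K] {A : Type*} [AddCommGroup A] [Module K A] [FiniteDimensional K A]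

noncomputable def myTr (m : A →ₗ[K] A →ₗ[K] A) (α : A ≃ₗ[K] A) (Bf : A →ₗ[K] A →ₗ[K] K)
    (hb : Function.Bijective Bf) : A →ₗ[K] A →ₗ[K] A :=
  ((Lstar (m - m.flip) α).compl₂ Bf).compr₂ (LinearEquiv.ofBijective Bf hb).symm.toLinearMap

noncomputable def myTl (m : A →ₗ[K] A →ₗ[K] A) (α : A ≃ₗ[K] A) (Bf : A →ₗ[K] A →ₗ[K] K)
    (hb : Function.Bijective Bf) : A →ₗ[K] A →ₗ[K] A :=
  ((Rstar m α).compl₂ Bf).compr₂ (LinearEquiv.ofBijective Bf hb).symm.toLinearMap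

theorem myTr_pair (m : A →ₗ[K] A →ₗ[K] A) (α : A ≃ₗ[K] A) (Bf : A →ₗ[K] A →ₗ[K] K)
    (hb : Function.Bijective Bf) (x y z : A) :
    Bf (myTr m α Bf hb x y) z
      = -(Bf y ((m - m.flip) ((α⁻¹ : A ≃ₗ[K] A) x) ((α ^ (-2 : ℤ) : A ≃ₗ[K] A) z))) := by
  have h1 : Bf (myTr m α Bf hb x y) = (Lstar (m - m.flip) α).compl₂ Bf x y := by
    simp only [myTr, LinearMap.compr₂_apply, LinearEquiv.coe_coe]
    show (LinearEquiv.ofBijective Bf hb) ((LinearEquiv.ofBijective Bf hb).symm _) = _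
    rw [LinearEquiv.apply_symm_apply]
  rw [h1]
  rfl

theorem myTl_pair (m : A →ₗ[K] A →ₗ[K] A) (α : A ≃ₗ[K] A) (Bf : A →ₗ[K] A →ₗ[K] K)
    (hb : Function.Bijective Bf) (x y z : A) :
    Bf (myTl m α Bf hb x y) z
      = -(Bf y (m ((α ^ (-2 : ℤ) : A ≃ₗ[K] A) z) ((α⁻¹ : A ≃ₗ[K] A) x))) := by
  have h1 : Bf (myTl m α Bf hb x y) = (Rstar m α).compl₂ Bf x y := by
    simp only [myTl, LinearMap.compr₂_apply, LinearEquiv.coe_coe]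
    show (LinearEquiv.ofBijective Bf hb) ((LinearEquiv.ofBijective Bf hb).symm _) = _
    rw [LinearEquiv.apply_symm_apply]
  rw [h1]
  rfl

end MyAux
section MyCore
variable {K : Type*} [Field K] {A : Type*} [AddCommGroup A] [Module K A] [FiniteDimensional K A]
variable (m : A →ₗ[K] A →ₗ[K] A) (α : A ≃ₗ[K] A) (Bf : A →ₗ[K] A →ₗ[K] K)
  (hb : Function.Bijective Bf)
  (hsym : ∀ x y, Bf x y = Bf y x) (hinv : ∀ x y, Bf (α x) (α y) = Bf x y)
  (hstar : ∀ x y z, Bf (m x y) (α z) - Bf (α x) (m y z) = Bf (m y x) (α z) - Bf (α y) (m x z))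
  (hm : ∀ x y, α (m x y) = m (α x) (α y))
  (hpl : ∀ x y z, m (m x y) (α z) - m (α x) (m y z) = m (m y x) (α z) - m (α y) (m x z))

set_option linter.unusedSectionVars false

theorem bfext (hb : Function.Bijective Bf) {a b : A} (hab : ∀ z, Bf a z = Bf b z) : a = b :=
  hb.1 (LinearMap.ext hab)

theorem pow_neg_two_apply (c : A) : (α ^ (-2 : ℤ) : A ≃ₗ[K] A) (α (α c)) = c := by
  have h : (α ^ (-2:ℤ)) = (α⁻¹) * (α⁻¹) := by group
  rw [h]
  show (α⁻¹ : A ≃ₗ[K] A) ((α⁻¹ : A ≃ₗ[K] A) (α (α c))) = c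
  rw [show (α⁻¹ : A ≃ₗ[K] A) = α.symm from rfl]
  simp

theorem keytrG (s u c : A) :
    Bf (myTr m α Bf hb s u) (α (α c))
      = Bf u (m c ((α⁻¹ : A ≃ₗ[K] A) s)) - Bf u (m ((α⁻¹ : A ≃ₗ[K] A) s) c) := by
  rw [myTr_pair, pow_neg_two_apply]
  simp only [LinearMap.sub_apply, LinearMap.flip_apply, map_sub]
  ring

theorem keytlG (s u c : A) :
    Bf (myTl m α Bf hb s u) (α (α c)) = -(Bf u (m c ((α⁻¹ : A ≃ₗ[K] A) s))) := by
  rw [myTl_pair, pow_neg_two_apply]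

theorem keytr2 (x u c : A) :
    Bf (myTr m α Bf hb (α x) u) (α (α c)) = Bf u (m c x) - Bf u (m x c) := by
  rw [keytrG, show (α⁻¹ : A ≃ₗ[K] A) (α x) = x from α.symm_apply_apply x]

theorem keytl2 (x u c : A) :
    Bf (myTl m α Bf hb (α x) u) (α (α c)) = -(Bf u (m c x)) := by
  rw [keytlG, show (α⁻¹ : A ≃ₗ[K] A) (α x) = x from α.symm_apply_apply x]

include hb hsym hinv hstar hm hpl

theorem hvert (x y : A) : myTr m α Bf hb x y - myTl m α Bf hb y x = m x y := by
  obtain ⟨X, rfl⟩ : ∃ X, x = α X := ⟨α.symm x, (α.apply_symm_apply x).symm⟩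
  obtain ⟨Y, rfl⟩ : ∃ Y, y = α Y := ⟨α.symm y, (α.apply_symm_apply y).symm⟩
  apply bfext Bf hb
  intro c
  obtain ⟨C, rfl⟩ : ∃ C, c = α (α C) := ⟨α.symm (α.symm c), by simp⟩
  rw [map_sub, LinearMap.sub_apply, keytr2, keytl2, ← hm, hinv]
  linear_combination hstar C X Y + hsym (α Y) (m C X) - hsym (α Y) (m X C)
    + hsym (α C) (m X Y)

theorem halg_tr (x y : A) : α (myTr m α Bf hb x y) = myTr m α Bf hb (α x) (α y) := by
  obtain ⟨X, rfl⟩ : ∃ X, x = α X := ⟨α.symm x, (α.apply_symm_apply x).symm⟩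
  apply bfext Bf hb
  intro c
  obtain ⟨C, rfl⟩ : ∃ C, c = α (α (α C)) := ⟨α.symm (α.symm (α.symm c)), by simp⟩
  rw [show Bf (α (myTr m α Bf hb (α X) y)) (α (α (α C)))
      = Bf (myTr m α Bf hb (α X) y) (α (α C)) from hinv _ _, keytr2, keytr2,
    ← hm, ← hm, hinv, hinv]

theorem halg_tl (x y : A) : α (myTl m α Bf hb x y) = myTl m α Bf hb (α x) (α y) := by
  obtain ⟨X, rfl⟩ : ∃ X, x = α X := ⟨α.symm x, (α.apply_symm_apply x).symm⟩
  apply bfext Bf hb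
  intro c
  obtain ⟨C, rfl⟩ : ∃ C, c = α (α (α C)) := ⟨α.symm (α.symm (α.symm c)), by simp⟩
  rw [show Bf (α (myTl m α Bf hb (α X) y)) (α (α (α C)))
      = Bf (myTl m α Bf hb (α X) y) (α (α C)) from hinv _ _, keytl2, keytl2,
    ← hm, hinv]

end MyCore
section MyCore2
variable {K : Type*} [Field K] {A : Type*} [AddCommGroup A] [Module K A] [FiniteDimensional K A]
variable (m : A →ₗ[K] A →ₗ[K] A) (α : A ≃ₗ[K] A) (Bf : A →ₗ[K] A →ₗ[K] K)
  (hb : Function.Bijective Bf)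
  (hsym : ∀ x y, Bf x y = Bf y x) (hinv : ∀ x y, Bf (α x) (α y) = Bf x y)
  (hstar : ∀ x y z, Bf (m x y) (α z) - Bf (α x) (m y z) = Bf (m y x) (α z) - Bf (α y) (m x z))
  (hm : ∀ x y, α (m x y) = m (α x) (α y))
  (hpl : ∀ x y z, m (m x y) (α z) - m (α x) (m y z) = m (m y x) (α z) - m (α y) (m x z))

set_option linter.unusedSectionVars false

theorem invalpha (a : A) : (α⁻¹ : A ≃ₗ[K] A) (α a) = a := α.symm_apply_apply a

include hb hsym hinv hstar hm hpl

theorem ax2 (x y z : A) :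
    myTl m α Bf hb (myTr m α Bf hb x y) (α z) + myTl m α Bf hb (α y) (myTr m α Bf hb x z)
      + myTl m α Bf hb (α y) (myTl m α Bf hb x z) - myTl m α Bf hb (myTl m α Bf hb y x) (α z)
      - myTr m α Bf hb (α x) (myTl m α Bf hb y z) = 0 := by
  obtain ⟨X, rfl⟩ : ∃ X, x = α (α X) := ⟨α.symm (α.symm x), by simp⟩
  obtain ⟨Y, rfl⟩ : ∃ Y, y = α (α Y) := ⟨α.symm (α.symm y), by simp⟩
  obtain ⟨Z, rfl⟩ : ∃ Z, z = α (α Z) := ⟨α.symm (α.symm z), by simp⟩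
  have hm2 : ∀ a b, m (α a) (α b) = α (m a b) := fun a b => (hm a b).symm
  apply bfext Bf hb
  intro c
  obtain ⟨D, rfl⟩ : ∃ D, c = α (α (α (α D))) := ⟨α.symm (α.symm (α.symm (α.symm c))), by simp⟩
  simp only [map_add, map_sub, LinearMap.add_apply, LinearMap.sub_apply, map_zero,
    LinearMap.zero_apply]
  simp only [keytrG m α Bf hb, keytlG m α Bf hb, invalpha]
  simp only [hm2]
  simp only [keytrG m α Bf hb, keytlG m α Bf hb, invalpha]
  have hv := hvert m α Bf hb hsym hinv hstar hm hpl (α (α X)) (α (α Y))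
  have comb1 : Bf (α (α (α Z))) (m (α (α D))
        ((α⁻¹ : A ≃ₗ[K] A) (myTr m α Bf hb (α (α X)) (α (α Y)))))
      - Bf (α (α (α Z))) (m (α (α D))
        ((α⁻¹ : A ≃ₗ[K] A) (myTl m α Bf hb (α (α Y)) (α (α X)))))
      = Bf (α (α Z)) (m (α D) (m X Y)) := by
    rw [← map_sub, ← map_sub, ← map_sub, hv]
    simp only [hm2, invalpha, hinv]
  have hp : Bf (α (α Z)) (m (m D X) (α Y)) - Bf (α (α Z)) (m (α D) (m X Y))
      = Bf (α (α Z)) (m (m X D) (α Y)) - Bf (α (α Z)) (m (α X) (m D Y)) := by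
    have := congrArg (Bf (α (α Z))) (hpl D X Y)
    simpa [map_sub] using this
  linear_combination hp - comb1

end MyCore2
section MyCore3
variable {K : Type*} [Field K] {A : Type*} [AddCommGroup A] [Module K A] [FiniteDimensional K A]
variable (m : A →ₗ[K] A →ₗ[K] A) (α : A ≃ₗ[K] A) (Bf : A →ₗ[K] A →ₗ[K] K)
  (hb : Function.Bijective Bf)
  (hsym : ∀ x y, Bf x y = Bf y x) (hinv : ∀ x y, Bf (α x) (α y) = Bf x y)
  (hstar : ∀ x y z, Bf (m x y) (α z) - Bf (α x) (m y z) = Bf (m y x) (α z) - Bf (α y) (m x z))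
  (hm : ∀ x y, α (m x y) = m (α x) (α y))
  (hpl : ∀ x y z, m (m x y) (α z) - m (α x) (m y z) = m (m y x) (α z) - m (α y) (m x z))

set_option linter.unusedSectionVars false

include hb hsym hinv hstar hm hpl

theorem ax1 (x y z : A) :
    myTr m α Bf hb (myTr m α Bf hb x y) (α z) + myTr m α Bf hb (myTl m α Bf hb x y) (α z)
      + myTr m α Bf hb (α y) (myTr m α Bf hb x z)
      - myTr m α Bf hb (myTl m α Bf hb y x) (α z)
      - myTr m α Bf hb (myTr m α Bf hb y x) (α z)
      - myTr m α Bf hb (α x) (myTr m α Bf hb y z) = 0 := by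
  obtain ⟨X, rfl⟩ : ∃ X, x = α (α X) := ⟨α.symm (α.symm x), by simp⟩
  obtain ⟨Y, rfl⟩ : ∃ Y, y = α (α Y) := ⟨α.symm (α.symm y), by simp⟩
  obtain ⟨Z, rfl⟩ : ∃ Z, z = α (α Z) := ⟨α.symm (α.symm z), by simp⟩
  have hm2 : ∀ a b, m (α a) (α b) = α (m a b) := fun a b => (hm a b).symm
  apply bfext Bf hb
  intro c
  obtain ⟨D, rfl⟩ : ∃ D, c = α (α (α (α D))) := ⟨α.symm (α.symm (α.symm (α.symm c))), by simp⟩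
  simp only [map_add, map_sub, LinearMap.add_apply, LinearMap.sub_apply, map_zero,
    LinearMap.zero_apply]
  simp only [keytrG m α Bf hb, keytlG m α Bf hb, invalpha]
  simp only [hm2]
  simp only [keytrG m α Bf hb, keytlG m α Bf hb, invalpha]
  have hs : myTr m α Bf hb (α (α X)) (α (α Y)) + myTl m α Bf hb (α (α X)) (α (α Y))
      - myTl m α Bf hb (α (α Y)) (α (α X)) - myTr m α Bf hb (α (α Y)) (α (α X))
      = m (α (α X)) (α (α Y)) - m (α (α Y)) (α (α X)) := by
    rw [← hvert m α Bf hb hsym hinv hstar hm hpl (α (α X)) (α (α Y)),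
      ← hvert m α Bf hb hsym hinv hstar hm hpl (α (α Y)) (α (α X))]
    abel
  have hc1 := congrArg
    (fun t => Bf (α (α (α Z))) (m (α (α D)) ((α⁻¹ : A ≃ₗ[K] A) t))) hs
  have hc2 := congrArg
    (fun t => Bf (α (α (α Z))) (m ((α⁻¹ : A ≃ₗ[K] A) t) (α (α D)))) hs
  simp only [map_add, map_sub, LinearMap.add_apply, LinearMap.sub_apply, hm2, invalpha,
    hinv] at hc1 hc2
  have hp1 : Bf (α (α Z)) (m (m D Y) (α X)) - Bf (α (α Z)) (m (α D) (m Y X))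
      = Bf (α (α Z)) (m (m Y D) (α X)) - Bf (α (α Z)) (m (α Y) (m D X)) := by
    have := congrArg (Bf (α (α Z))) (hpl D Y X); simpa [map_sub] using this
  have hp2 : Bf (α (α Z)) (m (m D X) (α Y)) - Bf (α (α Z)) (m (α D) (m X Y))
      = Bf (α (α Z)) (m (m X D) (α Y)) - Bf (α (α Z)) (m (α X) (m D Y)) := by
    have := congrArg (Bf (α (α Z))) (hpl D X Y); simpa [map_sub] using this
  have hp3 : Bf (α (α Z)) (m (m X Y) (α D)) - Bf (α (α Z)) (m (α X) (m Y D))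
      = Bf (α (α Z)) (m (m Y X) (α D)) - Bf (α (α Z)) (m (α Y) (m X D)) := by
    have := congrArg (Bf (α (α Z))) (hpl X Y D); simpa [map_sub] using this
  linear_combination hc1 - hc2 + hp1 - hp2 - hp3

end MyCore3
universe u v

theorem stmt_17 {K : Type*} [Field K] {A : Type*} [AddCommGroup A] [Module K A]
    [FiniteDimensional K A]
    (m : A →ₗ[K] A →ₗ[K] A) (α : A ≃ₗ[K] A)
    (h : IsHomPreLie m (α : A →ₗ[K] A))
    (Bf : A →ₗ[K] A →ₗ[K] K)
    (hB : IsHessian m (α : A →ₗ[K] A) Bf) :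
    ∃ tr tl : A →ₗ[K] A →ₗ[K] A,
      (∀ x y z : A, Bf (tr x y) z
        = -(Bf y ((m - m.flip) ((α⁻¹ : A ≃ₗ[K] A) x) ((α ^ (-2 : ℤ) : A ≃ₗ[K] A) z)))) ∧
      (∀ x y z : A, Bf (tl x y) z
        = -(Bf y (m ((α ^ (-2 : ℤ) : A ≃ₗ[K] A) z) ((α⁻¹ : A ≃ₗ[K] A) x)))) ∧
      IsHomLDendriform tr tl (α : A →ₗ[K] A) ∧
      tr - tl.flip = m ∧
      (∀ tr' tl' : A →ₗ[K] A →ₗ[K] A,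
        (∀ x y z : A, Bf (tr' x y) z
          = -(Bf y ((m - m.flip) ((α⁻¹ : A ≃ₗ[K] A) x) ((α ^ (-2 : ℤ) : A ≃ₗ[K] A) z)))) →
        (∀ x y z : A, Bf (tl' x y) z
          = -(Bf y (m ((α ^ (-2 : ℤ) : A ≃ₗ[K] A) z) ((α⁻¹ : A ≃ₗ[K] A) x)))) →
        tr' = tr ∧ tl' = tl) := by
  obtain ⟨hm0, hpl0⟩ := h
  obtain ⟨hsym, hnd, hinv0, hstar0⟩ := hB
  have hm : ∀ x y, α (m x y) = m (α x) (α y) := fun x y => by simpa using hm0 x y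
  have hpl : ∀ x y z, m (m x y) (α z) - m (α x) (m y z)
      = m (m y x) (α z) - m (α y) (m x z) := fun x y z => by simpa using hpl0 x y z
  have hinv : ∀ x y, Bf (α x) (α y) = Bf x y := fun x y => by simpa using hinv0 x y
  have hstar : ∀ x y z, Bf (m x y) (α z) - Bf (α x) (m y z)
      = Bf (m y x) (α z) - Bf (α y) (m x z) := fun x y z => by simpa using hstar0 x y z
  have hb : Function.Bijective Bf := by
    have hinj : Function.Injective Bf := by
      rw [injective_iff_map_eq_zero]
      intro a ha
      exact hnd a (fun y => by rw [ha]; rfl)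
    exact ⟨hinj, (LinearMap.injective_iff_surjective_of_finrank_eq_finrank
      (Subspace.dual_finrank_eq).symm).mp hinj⟩
  refine ⟨myTr m α Bf hb, myTl m α Bf hb, myTr_pair m α Bf hb, myTl_pair m α Bf hb,
    ⟨?_, ?_, ?_, ?_⟩, ?_, ?_⟩
  · intro x y; simpa using halg_tr m α Bf hb hsym hinv hstar hm hpl x y
  · intro x y; simpa using halg_tl m α Bf hb hsym hinv hstar hm hpl x y
  · intro x y z; simpa using ax1 m α Bf hb hsym hinv hstar hm hpl x y z
  · intro x y z; simpa using ax2 m α Bf hb hsym hinv hstar hm hpl x y z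
  · ext x y
    simp only [LinearMap.sub_apply, LinearMap.flip_apply]
    exact hvert m α Bf hb hsym hinv hstar hm hpl x y
  · intro tr' tl' h1 h2
    constructor
    · refine LinearMap.ext fun x => LinearMap.ext fun y => bfext Bf hb fun z => ?_
      rw [h1, myTr_pair]
    · refine LinearMap.ext fun x => LinearMap.ext fun y => bfext Bf hb fun z => ?_
      rw [h2, myTl_pair]
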